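/- arXiv:1405.0348 — 7 statements merged into one kernel-verified Lean document; each statement's English description precedes it below -/
import Mathlib

section
/- Let q be a prime power, let H be an m×n parity-check matrix over 𝔽_q, and let C = {c ∈ 𝔽_q^n : Hc = 0}. Define the connectivity graph G on the n coordinate positions by joining two distinct positions i and j whenever some row of H has nonzero entries in both position i and position j. If c is a nonzero codeword of C of minimum Hamming weight among all nonzero codewords, then the subgraph of G induced on the support of c is connected. -/
/-- A minimum-weight nonzero codeword of a linear code over 𝔽_q forms a
connected (linked) cluster on the connectivity graph of the parity-check
matrix `H`, where distinct positions `i` and `j` are adjacent iff some row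
of `H` is nonzero in both positions. -/
theorem minimum_weight_codeword_support_connected
    (q m n : ℕ) (hq : IsPrimePow q)
    (F : Type*) [Field F] [Fintype F] [DecidableEq F] (hF : Fintype.card F = q)
    (H : Matrix (Fin m) (Fin n) F)
    (G : SimpleGraph (Fin n))
    (hG : ∀ i j : Fin n, G.Adj i j ↔ i ≠ j ∧ ∃ r : Fin m, H r i ≠ 0 ∧ H r j ≠ 0)
    (c : Fin n → F) (hc0 : c ≠ 0) (hcC : H.mulVec c = 0)
    (hmin : ∀ c' : Fin n → F, c' ≠ 0 → H.mulVec c' = 0 →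
      hammingNorm c ≤ hammingNorm c') :
    (G.induce {i : Fin n | c i ≠ 0}).Connected := by
  classical
  obtain ⟨i0, hi0⟩ : ∃ i, c i ≠ 0 := Function.ne_iff.mp hc0
  set S : Set (Fin n) := {i : Fin n | c i ≠ 0} with hS
  have hi0S : i0 ∈ S := hi0
  set v0 : S := ⟨i0, hi0S⟩ with hv0
  -- P j : j is in the support and reachable from i0 in the induced graph
  set P : Fin n → Prop :=
    fun j => ∃ hj : j ∈ S, (G.induce S).Reachable v0 ⟨j, hj⟩ with hP
  set c1 : Fin n → F := fun j => if P j then c j else 0 with hc1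
  -- key: reachability propagates along rows
  have key : ∀ (r : Fin m) (j k : Fin n), P j → H r j ≠ 0 →
      c k ≠ 0 → H r k ≠ 0 → P k := by
    intro r j k hPj hHj hck hHk
    obtain ⟨hj, hreach⟩ := hPj
    by_cases hjk : j = k
    · subst hjk; exact ⟨hj, hreach⟩
    · have hadj : (G.induce S).Adj ⟨j, hj⟩ ⟨k, hck⟩ := by
        simp only [SimpleGraph.comap_adj, Function.Embedding.coe_subtype]
        exact (hG j k).mpr ⟨hjk, r, hHj, hHk⟩
      exact ⟨hck, hreach.trans hadj.reachable⟩
  -- c1 is a codeword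
  have hc1C : H.mulVec c1 = 0 := by
    funext r
    by_cases hr : ∃ j, P j ∧ H r j ≠ 0
    · obtain ⟨j, hPj, hHj⟩ := hr
      have hck1 : ∀ k, H r k * c1 k = H r k * c k := by
        intro k
        by_cases hHk : H r k = 0
        · rw [hHk, zero_mul, zero_mul]
        by_cases hck : c k = 0
        · have h1 : c1 k = 0 := by
            simp only [hc1]
            split
            · exact hck
            · rfl
          rw [h1, hck]
        · have hPk := key r j k hPj hHj hck hHk
          simp only [hc1, hPk, if_true]
      have : H.mulVec c1 r = H.mulVec c r := by
        simp only [Matrix.mulVec, dotProduct]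
        exact Finset.sum_congr rfl fun k _ => hck1 k
      rw [this, hcC]
    · push_neg at hr
      simp only [Matrix.mulVec, dotProduct, Pi.zero_apply]
      refine Finset.sum_eq_zero fun k _ => ?_
      by_cases hPk : P k
      · rw [hr k hPk, zero_mul]
      · have : c1 k = 0 := by simp only [hc1, hPk, if_false]
        rw [this, mul_zero]
  have hc10 : c1 ≠ 0 := by
    have hPi0 : P i0 := ⟨hi0S, SimpleGraph.Reachable.refl _⟩
    intro h
    have : c1 i0 = 0 := by rw [h]; rfl
    rw [hc1] at this
    simp only [hPi0, if_true] at this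
    exact hi0 this
  -- support of c1 is contained in support of c
  have hsub : (Finset.univ.filter fun i => c1 i ≠ 0) ⊆
      (Finset.univ.filter fun i : Fin n => c i ≠ 0) := by
    intro k hk
    simp only [Finset.mem_filter, Finset.mem_univ, true_and] at hk ⊢
    intro hck
    apply hk
    simp [hc1, hck]
  have hnorm1 : hammingNorm c1 = (Finset.univ.filter fun i => c1 i ≠ 0).card := rfl
  have hnormc : hammingNorm c = (Finset.univ.filter fun i : Fin n => c i ≠ 0).card := rfl
  have hge : hammingNorm c ≤ hammingNorm c1 := hmin c1 hc10 hc1C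
  have heq : (Finset.univ.filter fun i => c1 i ≠ 0) =
      (Finset.univ.filter fun i : Fin n => c i ≠ 0) :=
    Finset.eq_of_subset_of_card_le hsub (hnorm1 ▸ hnormc ▸ hge)
  -- every support element satisfies P
  have hall : ∀ j : Fin n, c j ≠ 0 → P j := by
    intro j hj
    have : j ∈ (Finset.univ.filter fun i => c1 i ≠ 0) := by
      rw [heq]; simp [hj]
    simp only [Finset.mem_filter, Finset.mem_univ, true_and] at this
    by_contra hPj
    apply this
    simp [hc1, hPj]
  rw [SimpleGraph.connected_iff]
  refine ⟨?_, ⟨v0⟩⟩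
  · intro x y
    have hx : P x.1 := hall x.1 x.2
    have hy : P y.1 := hall y.1 y.2
    obtain ⟨hx1, hx2⟩ := hx
    obtain ⟨hy1, hy2⟩ := hy
    have ex : (⟨x.1, hx1⟩ : S) = x := Subtype.ext rfl
    have ey : (⟨y.1, hy1⟩ : S) = y := Subtype.ext rfl
    rw [ex] at hx2; rw [ey] at hy2
    exact hx2.symm.trans hy2
end

section
/- Let n ≥ 1, let v : ℤ/nℤ → 𝔽_q be a vector of Hamming weight w, and let 1 ≤ s ≤ n. For i ∈ ℤ/nℤ let W(i) denote the Hamming weight of v restricted to the cyclic window {i, i+1, …, i+s−1}. Then there exists an index i such that W(i) = ⌊ws/n⌋. -/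
private lemma ivt_aux (g : ℕ → ℕ) (c : ℕ) (h0 : g 0 ≤ c)
    (hstep : ∀ m, g (m + 1) ≤ g m + 1) :
    ∀ k, c ≤ g k → ∃ m, g m = c := by
  intro k
  induction k with
  | zero => intro h; exact ⟨0, le_antisymm h0 h⟩
  | succ k ih =>
    intro h
    by_cases hk : c ≤ g k
    · exact ih hk
    · exact ⟨k + 1, by have := hstep k; omega⟩

/-- For a vector `v : ℤ/nℤ → 𝔽_q` of Hamming weight `w` and a window length
`1 ≤ s ≤ n`, some cyclic window of `s` consecutive positions carries exactly
`⌊w·s/n⌋` nonzero coordinates of `v`. -/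
theorem exists_window_of_average_weight
    (q n s w : ℕ) [NeZero n] (hq : IsPrimePow q)
    (F : Type*) [Field F] [Fintype F] [DecidableEq F] (hF : Fintype.card F = q)
    (v : ZMod n → F) (hw : hammingNorm v = w) (hs1 : 1 ≤ s) (hsn : s ≤ n) :
    ∃ i : ZMod n,
      ((Finset.range s).filter (fun j : ℕ => v (i + (j : ZMod n)) ≠ 0)).card
        = w * s / n := by
  classical
  let W : ZMod n → ℕ :=
    fun i => ((Finset.range s).filter (fun j : ℕ => v (i + (j : ZMod n)) ≠ 0)).card
  show ∃ i : ZMod n, W i = w * s / n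
  set d := w * s / n with hd
  have hn : 0 < n := Nat.pos_of_ne_zero (NeZero.ne n)
  -- total sum of window weights
  have hsum : ∑ i : ZMod n, W i = w * s := by
    have h1 : ∀ i : ZMod n,
        W i = ∑ j ∈ Finset.range s, if v (i + (j : ZMod n)) ≠ 0 then 1 else 0 := by
      intro i; exact Finset.card_filter _ _
    simp only [h1]
    rw [Finset.sum_comm]
    have hcol : ∀ j : ℕ,
        (∑ i : ZMod n, if v (i + (j : ZMod n)) ≠ 0 then 1 else 0) = w := by
      intro j
      have : (∑ i : ZMod n, if v (i + (j : ZMod n)) ≠ 0 then 1 else 0)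
          = ∑ i : ZMod n, if v i ≠ 0 then 1 else 0 :=
        Fintype.sum_equiv (Equiv.addRight (j : ZMod n)) _ _ (fun i => rfl)
      rw [this, ← Finset.card_filter, ← hw, hammingNorm]
    simp only [hcol]
    rw [Finset.sum_const, Finset.card_range, smul_eq_mul]
    ring
  -- step bound
  have hstep : ∀ i : ZMod n, W (i + 1) ≤ W i + 1 := by
    intro i
    have hinj : Function.Injective (fun j : ℕ => j + 1) := add_left_injective 1
    have h1 : W (i + 1)
        = (((Finset.range s).filter (fun j : ℕ => v (i + 1 + (j : ZMod n)) ≠ 0)).image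
            (fun j => j + 1)).card :=
      (Finset.card_image_of_injective _ hinj).symm
    have hsub : (((Finset.range s).filter (fun j : ℕ => v (i + 1 + (j : ZMod n)) ≠ 0)).image
            (fun j => j + 1))
        ⊆ (Finset.range (s + 1)).filter (fun j : ℕ => v (i + (j : ZMod n)) ≠ 0) := by
      intro x hx
      simp only [Finset.mem_image, Finset.mem_filter, Finset.mem_range] at hx ⊢
      obtain ⟨j, ⟨hjs, hjv⟩, rfl⟩ := hx
      refine ⟨by omega, ?_⟩
      have : ((j + 1 : ℕ) : ZMod n) = (j : ZMod n) + 1 := by push_cast; ring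
      rw [this]
      convert hjv using 2
      ring
    have h2 : ((Finset.range (s + 1)).filter (fun j : ℕ => v (i + (j : ZMod n)) ≠ 0)).card
        ≤ W i + 1 := by
      rw [Finset.range_add_one, Finset.filter_insert]
      split
      · exact Finset.card_insert_le _ _
      · exact Nat.le_succ_of_le le_rfl
    calc W (i + 1) = _ := h1
      _ ≤ _ := Finset.card_le_card hsub
      _ ≤ W i + 1 := h2
  -- exists low point
  have hlow : ∃ i₀ : ZMod n, W i₀ ≤ d := by
    by_contra h
    push_neg at h
    have : ∑ i : ZMod n, (d + 1) ≤ ∑ i : ZMod n, W i :=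
      Finset.sum_le_sum (fun i _ => h i)
    rw [hsum, Finset.sum_const, Finset.card_univ, ZMod.card, smul_eq_mul] at this
    have h2 := Nat.div_add_mod (w * s) n
    have h3 := Nat.mod_lt (w * s) hn
    have h4 : n * (d + 1) = w * s / n * n + n := by rw [hd]; ring
    have h5 : n * (w * s / n) = w * s / n * n := Nat.mul_comm _ _
    omega
  -- exists high point
  have hhigh : ∃ i₁ : ZMod n, d ≤ W i₁ := by
    by_contra h
    push_neg at h
    have h1 : ∑ i : ZMod n, W i < ∑ i : ZMod n, d :=
      Finset.sum_lt_sum_of_nonempty Finset.univ_nonempty (fun i _ => h i)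
    rw [hsum, Finset.sum_const, Finset.card_univ, ZMod.card, smul_eq_mul] at h1
    have h2 : d * n ≤ w * s := Nat.div_mul_le_self (w * s) n
    nlinarith
  obtain ⟨i₀, h₀⟩ := hlow
  obtain ⟨i₁, h₁⟩ := hhigh
  -- discrete IVT along the path from i₀ to i₁
  have hg0 : W (i₀ + ((0 : ℕ) : ZMod n)) ≤ d := by simpa using h₀
  have hgstep : ∀ m : ℕ, W (i₀ + ((m + 1 : ℕ) : ZMod n)) ≤ W (i₀ + (m : ZMod n)) + 1 := by
    intro m
    have : i₀ + ((m + 1 : ℕ) : ZMod n) = (i₀ + (m : ZMod n)) + 1 := by push_cast; ring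
    rw [this]
    exact hstep _
  have hgk : d ≤ W (i₀ + (((i₁ - i₀).val : ℕ) : ZMod n)) := by
    have : i₀ + (((i₁ - i₀).val : ℕ) : ZMod n) = i₁ := by
      rw [ZMod.natCast_val, ZMod.cast_id]; ring
    rw [this]; exact h₁
  obtain ⟨m, hm⟩ := ivt_aux (fun k => W (i₀ + (k : ZMod n))) d hg0 hgstep _ hgk
  exact ⟨i₀ + (m : ZMod n), hm⟩
end

section
/- Let 0 < w ≤ n − s with s ≥ 1. There exists a family 𝓕 of subsets of an n-element set, each of cardinality n − s, such that every subset of cardinality w is contained in some member of 𝓕, and |𝓕| ≤ (C(n,w)/C(n−s,w)) · (1 + ln C(n−s,w)). -/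
/-!
Put `q = C(n,w) / C(n-s,w)`. Every `w`-set lies in the same number of `(n-s)`-sets, so averaging
shows that any family `U` of still uncovered `w`-sets has a block containing at least `|U| / q`
of them. Choosing such blocks greedily, the number of blocks needed for `u` uncovered sets is
bounded by the concave potential `φ(u) = u` for `u ≤ q`, `φ(u) = q (1 + log (u / q))` for `u ≥ q`:
a step lowers `u` by at least `max 1 (u / q)` while `φ' = min 1 (q / u)`, so `φ` drops by at
least one. At `u = C(n,w)` the potential equals `q (1 + log C(n-s,w))`.
-/

open Finset Real

noncomputable def greedyBound (q u : ℝ) : ℝ := if u ≤ q then u else q * (1 + log (u / q))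

lemma greedyBound_zero {q : ℝ} (hq : 0 ≤ q) : greedyBound q 0 = 0 := if_pos hq

lemma greedyBound_of_le {q u : ℝ} (hqu : q ≤ u) : greedyBound q u = q * (1 + log (u / q)) := by
  unfold greedyBound
  split_ifs with h
  · obtain rfl : u = q := le_antisymm h hqu
    rcases eq_or_ne u 0 with rfl | hu <;> simp [*]
  · rfl

lemma greedyBound_add_mul_min_le {q u u' : ℝ} (hq : 0 < q) (hu'u : u' ≤ u) :
    greedyBound q u' + (u - u') * min 1 (q / u) ≤ greedyBound q u := by
  unfold greedyBound
  split_ifs with h h' h'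
  · nlinarith [min_le_left 1 (q / u)]
  · have hu : 0 < u := hq.trans (not_le.1 h')
    have hlog := one_sub_inv_le_log_of_pos (div_pos hu hq)
    rw [min_eq_right ((div_le_one hu).2 (not_le.1 h').le)]
    rw [inv_div] at hlog
    have : u' * (1 - q / u) ≤ q * (1 - q / u) :=
      mul_le_mul_of_nonneg_right h (by rw [sub_nonneg, div_le_one hu]; linarith)
    have : (u - u') * (q / u) = q - u' * (q / u) := by field_simp
    nlinarith
  · linarith
  · have hu'0 : 0 < u' := hq.trans (not_le.1 h)
    have hu : 0 < u := hu'0.trans_le hu'u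
    have hlog := one_sub_inv_le_log_of_pos (div_pos hu hu'0)
    have hsplit : log (u / q) = log (u' / q) + log (u / u') := by
      rw [← log_mul (by positivity) (by positivity)]; field_simp
    rw [min_eq_right ((div_le_one hu).2 (by linarith)), hsplit]
    rw [inv_div] at hlog
    have : (u - u') * (q / u) = q * (1 - u' / u) := by field_simp
    nlinarith

lemma one_add_greedyBound_le {q u u' : ℝ} (hq : 0 < q) (hu' : 0 ≤ u') (hstep : u' + 1 ≤ u)
    (hfrac : u ≤ q * (u - u')) : 1 + greedyBound q u' ≤ greedyBound q u := by
  have hu : 0 < u := by linarith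
  have : 1 ≤ (u - u') * min 1 (q / u) := by
    rw [mul_min_of_nonneg _ _ (by linarith), mul_one]
    refine le_min (by linarith) ?_
    rw [mul_div_assoc', le_div_iff₀ hu]
    linarith
  linarith [greedyBound_add_mul_min_le hq (by linarith : u' ≤ u)]

theorem exists_cover_card_le_greedyBound {α β : Type*} [DecidableEq β] (B : Set β)
    (r : β → α → Prop) [DecidableRel r] {q : ℝ} (hq : 0 < q) (X : Finset α)
    (hgood : ∀ U ⊆ X, U.Nonempty → ∃ b ∈ B, (#U : ℝ) ≤ q * #{x ∈ U | r b x}) :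
    ∃ F : Finset β, ↑F ⊆ B ∧ (∀ x ∈ X, ∃ b ∈ F, r b x) ∧ (#F : ℝ) ≤ greedyBound q #X := by
  induction X using Finset.strongInduction with
  | H X ih =>
    rcases X.eq_empty_or_nonempty with rfl | hX
    · exact ⟨∅, by simp, by simp, by simp [greedyBound_zero hq.le]⟩
    obtain ⟨b, hbB, hb⟩ := hgood X subset_rfl hX
    set X' := {x ∈ X | ¬ r b x}
    have hsplit : #{x ∈ X | r b x} + #X' = #X := card_filter_add_card_filter_not _
    have hcovered : 0 < #{x ∈ X | r b x} := by
      have : (0 : ℝ) < #X := by exact_mod_cast hX.card_pos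
      exact_mod_cast pos_of_mul_pos_right (this.trans_le hb) hq.le
    have hX' : X' ⊂ X := filter_ssubset.2 (by simpa [Finset.Nonempty] using card_pos.1 hcovered)
    obtain ⟨F, hFB, hFX, hF⟩ := ih X' hX' fun U hU => hgood U (hU.trans (filter_subset _ _))
    refine ⟨insert b F, by simp [Set.insert_subset_iff, hbB, hFB], fun x hx => ?_, ?_⟩
    · by_cases hbx : r b x
      · exact ⟨b, mem_insert_self b F, hbx⟩
      · obtain ⟨c, hc, hcx⟩ := hFX x (mem_filter.2 ⟨hx, hbx⟩)
        exact ⟨c, mem_insert_of_mem hc, hcx⟩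
    · have hsplit' : (#{x ∈ X | r b x} : ℝ) + #X' = #X := by exact_mod_cast hsplit
      have hone : (1 : ℝ) ≤ #{x ∈ X | r b x} := by exact_mod_cast hcovered
      have hstep : 1 + greedyBound q #X' ≤ greedyBound q #X :=
        one_add_greedyBound_le hq (by positivity) (by linarith)
          (by rw [← hsplit', add_sub_cancel_right]; rwa [hsplit'])
      calc (#(insert b F) : ℝ) ≤ #F + 1 := by exact_mod_cast card_insert_le b F
        _ ≤ greedyBound q #X := by linarith

lemma exists_card_mul_le_card_mul_card_filter {α β : Type*} {B : Finset β} (hB : B.Nonempty)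
    (U : Finset α) (r : β → α → Prop) [DecidableRel r] {d : ℕ}
    (hd : ∀ x ∈ U, #{b ∈ B | r b x} = d) :
    ∃ b ∈ B, #U * d ≤ #B * #{x ∈ U | r b x} := by
  refine exists_le_of_sum_le hB ?_
  have hcount : ∑ b ∈ B, #{x ∈ U | r b x} = #U * d := calc
    _ = ∑ x ∈ U, #{b ∈ B | r b x} := sum_card_bipartiteAbove_eq_sum_card_bipartiteBelow r
    _ = #U * d := by rw [sum_congr rfl hd, sum_const, smul_eq_mul]
  rw [sum_const, smul_eq_mul, ← mul_sum, hcount, mul_comm]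

lemma card_powersetCard_filter_superset {α : Type*} [Fintype α] [DecidableEq α] (k : ℕ)
    (W : Finset α) (hWk : #W ≤ k) :
    #{A ∈ powersetCard k univ | W ⊆ A} = (Fintype.card α - #W).choose (k - #W) := by
  rw [← card_compl, ← card_powersetCard]
  refine card_nbij' (· \ W) (· ∪ W) ?_ ?_ ?_ ?_
  · intro A hA
    simp only [coe_filter, mem_powersetCard, subset_univ, true_and] at hA
    simp [mem_powersetCard, card_sdiff_of_subset hA.2, hA.1]
  · intro A hA
    simp only [mem_coe, mem_powersetCard, subset_compl_iff_disjoint_right] at hA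
    simp [card_union_of_disjoint hA.1, hA.2, hWk]
  · intro A hA
    simp only [coe_filter, mem_powersetCard, subset_univ, true_and] at hA
    simp [sdiff_union_of_subset hA.2]
  · intro A hA
    simp only [mem_coe, mem_powersetCard, subset_compl_iff_disjoint_right] at hA
    simp [union_sdiff_cancel_right hA.1]

lemma exists_card_le_choose_div_choose_mul_card_filter {α : Type*} [Fintype α] [DecidableEq α]
    {k w : ℕ} (hwk : w ≤ k) (hk : k ≤ Fintype.card α) (U : Finset (Finset α))
    (hU : ∀ W ∈ U, #W = w) :
    ∃ A : Finset α, #A = k ∧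
      (#U : ℝ) ≤ (Fintype.card α).choose w / k.choose w * #{W ∈ U | W ⊆ A} := by
  set n := Fintype.card α
  obtain ⟨A, hA, hAU⟩ := exists_card_mul_le_card_mul_card_filter (B := powersetCard k univ)
    (powersetCard_nonempty.2 (by rwa [card_univ])) U (fun A W => W ⊆ A)
    (d := (n - w).choose (k - w))
    fun W hW => by rw [card_powersetCard_filter_superset k W (hU W hW ▸ hwk), hU W hW]
  rw [card_powersetCard, card_univ] at hAU
  have hnat : #U * k.choose w ≤ #{W ∈ U | W ⊆ A} * n.choose w := by
    refine Nat.le_of_mul_le_mul_right ?_ (Nat.choose_pos (Nat.sub_le_sub_right hk w))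
    calc #U * k.choose w * (n - w).choose (k - w)
        = #U * (n - w).choose (k - w) * k.choose w := by ring
      _ ≤ n.choose k * #{W ∈ U | W ⊆ A} * k.choose w := by gcongr
      _ = #{W ∈ U | W ⊆ A} * n.choose w * (n - w).choose (k - w) := by
        rw [mul_right_comm, Nat.choose_mul hwk]; ring
  refine ⟨A, (mem_powersetCard.1 hA).2, ?_⟩
  have hK : (0 : ℝ) < k.choose w := by exact_mod_cast Nat.choose_pos hwk
  rw [div_mul_eq_mul_div, le_div_iff₀ hK]
  exact_mod_cast hnat.trans_eq (mul_comm _ _)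

theorem covering_family_card_upper_bound_general
    (n s w : ℕ) (hws : w ≤ n - s) :
    ∃ 𝓕 : Finset (Finset (Fin n)),
      (∀ A ∈ 𝓕, A.card = n - s) ∧
      (∀ W : Finset (Fin n), W.card = w → ∃ A ∈ 𝓕, W ⊆ A) ∧
      (𝓕.card : ℝ) ≤
        ((n.choose w : ℝ) / ((n - s).choose w : ℝ)) *
          (1 + Real.log ((n - s).choose w : ℝ)) := by
  have hK : (1 : ℝ) ≤ (n - s).choose w := by exact_mod_cast Nat.choose_pos hws
  have hKM : ((n - s).choose w : ℝ) ≤ n.choose w := by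
    exact_mod_cast Nat.choose_le_choose w (Nat.sub_le n s)
  have hM : (0 : ℝ) < n.choose w := by linarith
  obtain ⟨𝓕, h𝓕, hcover, hcard⟩ := exists_cover_card_le_greedyBound
    {A : Finset (Fin n) | #A = n - s} (fun A W => W ⊆ A) (q := n.choose w / (n - s).choose w)
    (div_pos hM (by linarith))
    (powersetCard w univ) fun U hU _ => by
      simpa using exists_card_le_choose_div_choose_mul_card_filter hws (by simp) U
        fun W hW => (mem_powersetCard.1 (hU hW)).2
  refine ⟨𝓕, fun A hA => h𝓕 hA, fun W hW => hcover W (by simp [hW]), ?_⟩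
  rwa [card_powersetCard, card_univ, Fintype.card_fin, greedyBound_of_le (div_le_self hM.le hK),
    div_div_cancel₀ hM.ne'] at hcard

/-- Greedy covering upper bound: there exists a family `𝓕` of `(n-s)`-element
subsets of an `n`-element set covering every `w`-element subset, with
`|𝓕| ≤ (C(n,w)/C(n-s,w)) · (1 + ln C(n-s,w))`. -/
theorem covering_family_card_upper_bound
    (n s w : ℕ) (hw : 0 < w) (hws : w ≤ n - s) (hs : 1 ≤ s) :
    ∃ 𝓕 : Finset (Finset (Fin n)),
      (∀ A ∈ 𝓕, A.card = n - s) ∧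
      (∀ W : Finset (Fin n), W.card = w → ∃ A ∈ 𝓕, W ⊆ A) ∧
      (𝓕.card : ℝ) ≤
        ((n.choose w : ℝ) / ((n - s).choose w : ℝ)) *
          (1 + Real.log ((n - s).choose w : ℝ)) :=
  covering_family_card_upper_bound_general n s w hws
end

section
/- Let q be a prime power, k ≤ s ≤ n, and consider uniformly random k×n matrices G over 𝔽_q. The number of matrices G for which at least one of the n cyclic windows of s consecutive columns (columns i, i+1, …, i+s−1 taken mod n, for i = 0,…,n−1) forms a k×s submatrix of rank strictly less than k is at most n · q^{kn} · q^{k−s}/(q−1). In particular, if n·q^{k−s}/(q−1) < 1, there exists a k×n matrix all of whose cyclic windows of s consecutive columns have rank k. -/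
/-!
A `k × s` matrix has rank `< k` iff some nonzero `c ∈ F^k` satisfies `c ᵥ* M = 0`. For a fixed
window and a fixed `c ≠ 0`, the map `G ↦ c ᵥ* (window of G)` is a surjective linear map onto
`F^s`, so exactly `q^{kn} / q^s` matrices satisfy it. A matrix with a deficient window has at
least `q - 1` such witnesses (the nonzero multiples of one), so double counting bounds the
deficient matrices of one window by `q^k · q^{kn} / (q^s (q - 1))`, and a union bound over the
`n` windows gives the claim. If that bound is below `q^{kn}`, some matrix is good everywhere.
-/

open Finset Function

theorem AddMonoidHom.card_ker_mul_card_of_surjective {A B : Type*} [AddGroup A] [AddGroup B]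
    (f : A →+ B) (hf : Surjective f) :
    Nat.card f.ker * Nat.card B = Nat.card A := by
  rw [← f.ker.card_mul_index, AddSubgroup.index_ker, f.range_eq_top_of_surjective hf,
    AddSubgroup.card_top]

theorem ZMod.injective_add_natCast_fin {n s : ℕ} [NeZero n] (hsn : s ≤ n) (i : ZMod n) :
    Injective fun j : Fin s => i + ((j : ℕ) : ZMod n) := by
  refine (add_right_injective i).comp fun a b hab => Fin.ext ?_
  simpa [ZMod.val_natCast_of_lt (a.2.trans_le hsn), ZMod.val_natCast_of_lt (b.2.trans_le hsn)]
    using congrArg ZMod.val hab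

theorem exists_not_of_natCard_subtype_lt {α : Type*} {p : α → Prop}
    (h : Nat.card {x // p x} < Nat.card α) : ∃ x, ¬ p x := by
  by_contra! hp
  exact h.ne (Nat.card_congr (Equiv.subtypeUnivEquiv hp))

namespace Matrix

theorem natCard_eq_pow {m n α : Type*} [Fintype m] [Fintype n] [Fintype α] :
    Nat.card (Matrix m n α) = Fintype.card α ^ (Fintype.card m * Fintype.card n) := by
  rw [show Nat.card (Matrix m n α) = Nat.card (m → n → α) from rfl, Nat.card_fun,
    Nat.card_fun, ← pow_mul, mul_comm]
  simp only [Nat.card_eq_fintype_card]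

variable {m n κ K : Type*} [Fintype m] [Field K]

theorem vecMul_surjective_of_ne_zero {c : m → K} (hc : c ≠ 0) :
    Surjective fun M : Matrix m n K => c ᵥ* M := by
  classical
  obtain ⟨i, hi⟩ := Function.ne_iff.mp hc
  intro v
  refine ⟨vecMulVec (Pi.single i (c i)⁻¹) v, ?_⟩
  simp only [vecMul_vecMulVec, dotProduct_single, mul_inv_cancel₀ hi, one_smul]

theorem rank_lt_card_height_iff [Fintype n] (M : Matrix m n K) :
    M.rank < Fintype.card m ↔ ∃ c ≠ 0, c ᵥ* M = 0 := by
  have hfull : M.rank = Fintype.card m ↔ LinearIndependent K M.row := by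
    rw [linearIndependent_iff_card_eq_finrank_span, M.rank_eq_finrank_span_row, Set.finrank,
      eq_comm]
  rw [M.rank_le_card_height.lt_iff_ne, Ne, hfull, Fintype.not_linearIndependent_iff]
  simp only [vecMul_eq_sum, Function.ne_iff, and_comm]
  rfl

variable [Fintype κ] [Fintype K]

theorem card_vecMul_submatrix_eq_zero_mul {c : m → K} (hc : c ≠ 0) {e : κ → n}
    (he : Injective e) :
    Nat.card {M : Matrix m n K // c ᵥ* M.submatrix id e = 0} * Fintype.card K ^ Fintype.card κ =
      Nat.card (Matrix m n K) := by
  let f : Matrix m n K →+ (κ → K) :=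
    AddMonoidHom.mk' (fun M => c ᵥ* M.submatrix id e) fun A B => vecMul_add _ _ c
  have hf : Surjective f := by
    intro w
    obtain ⟨v, rfl⟩ := he.surjective_comp_right w
    obtain ⟨M, rfl⟩ := vecMul_surjective_of_ne_zero (n := n) hc v
    exact ⟨M, rfl⟩
  have hker := f.card_ker_mul_card_of_surjective hf
  rwa [Nat.card_fun, Nat.card_eq_fintype_card (α := K), Nat.card_eq_fintype_card (α := κ)]
    at hker

variable [Fintype n]

theorem card_rank_submatrix_lt_mul_le {e : κ → n} (he : Injective e) :
    (Fintype.card K - 1) * Nat.card {M : Matrix m n K // (M.submatrix id e).rank < Fintype.card m}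
        * Fintype.card K ^ Fintype.card κ ≤
      Fintype.card K ^ Fintype.card m * Nat.card (Matrix m n K) := by
  classical
  set q := Fintype.card K
  set N := Nat.card (Matrix m n K) / q ^ Fintype.card κ
  let r (M : Matrix m n K) (c : m → K) : Prop := c ᵥ* M.submatrix id e = 0
  let bad : Finset (Matrix m n K) := univ.filter fun M => (M.submatrix id e).rank < Fintype.card m
  have hwitness : ∀ M ∈ bad, q - 1 ≤ #((univ.erase 0).bipartiteAbove r M) := by
    intro M hM
    obtain ⟨c, hc, hcM⟩ := (rank_lt_card_height_iff _).mp (mem_filter.mp hM).2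
    calc q - 1 = #((univ.erase (0 : K)).image (· • c)) := by
          rw [card_image_of_injective _ (smul_left_injective K hc), card_erase_of_mem (mem_univ _),
            card_univ]
      _ ≤ _ := card_le_card fun x hx => by
          obtain ⟨a, ha, rfl⟩ := mem_image.mp hx
          simp [r, mem_bipartiteAbove, smul_ne_zero (ne_of_mem_erase ha) hc, smul_vecMul, hcM]
  have hfiber : ∀ c ∈ univ.erase (0 : m → K), #(bad.bipartiteBelow r c) ≤ N := by
    intro c hc
    rw [Nat.le_div_iff_mul_le (by positivity),
      ← card_vecMul_submatrix_eq_zero_mul (ne_of_mem_erase hc) he]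
    gcongr
    calc #(bad.bipartiteBelow r c) ≤ #(univ.filter (r · c)) :=
          card_le_card (filter_subset_filter _ (subset_univ _))
      _ = _ := by rw [Nat.card_eq_fintype_card, Fintype.card_subtype]
  have hcount := card_mul_le_card_mul r hwitness hfiber
  rw [Nat.card_eq_fintype_card, Fintype.card_subtype, mul_comm (q - 1)]
  calc #bad * (q - 1) * q ^ Fintype.card κ
        ≤ #(univ.erase (0 : m → K)) * N * q ^ Fintype.card κ := by gcongr
    _ ≤ q ^ Fintype.card m * Nat.card (Matrix m n K) := by
      rw [mul_assoc]
      gcongr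
      · exact card_erase_le.trans_eq (by simp [q])
      · exact Nat.div_mul_le_self _ _

theorem card_exists_rank_submatrix_lt_mul_le {ι : Type*} [Fintype ι] {e : ι → κ → n}
    (he : ∀ i, Injective (e i)) :
    (Fintype.card K - 1) *
        Nat.card {M : Matrix m n K // ∃ i, (M.submatrix id (e i)).rank < Fintype.card m} *
        Fintype.card K ^ Fintype.card κ ≤
      Fintype.card ι * (Fintype.card K ^ Fintype.card m * Nat.card (Matrix m n K)) := by
  classical
  have hunion :
      Nat.card {M : Matrix m n K // ∃ i, (M.submatrix id (e i)).rank < Fintype.card m} ≤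
        ∑ i, Nat.card {M : Matrix m n K // (M.submatrix id (e i)).rank < Fintype.card m} := by
    simp only [Nat.card_eq_fintype_card, Fintype.card_subtype]
    calc _ ≤ #(univ.biUnion fun i => univ.filter fun M : Matrix m n K =>
            (M.submatrix id (e i)).rank < Fintype.card m) :=
          card_le_card fun M hM => by simpa using hM
      _ ≤ _ := card_biUnion_le
  calc _ ≤ ∑ i, (Fintype.card K - 1) *
          Nat.card {M : Matrix m n K // (M.submatrix id (e i)).rank < Fintype.card m} *
          Fintype.card K ^ Fintype.card κ := by
        rw [← sum_mul, ← mul_sum]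
        gcongr
    _ ≤ _ := (sum_le_sum fun i _ => card_rank_submatrix_lt_mul_le (he i)).trans_eq
        (by rw [sum_const, card_univ, smul_eq_mul])

end Matrix

theorem sliding_window_full_rank_union_bound_general
    (q k s n : ℕ) [NeZero n] (hsn : s ≤ n)
    (F : Type*) [Field F] [Fintype F] (hF : Fintype.card F = q) :
    (Nat.card {G : Matrix (Fin k) (ZMod n) F //
        ∃ i : ZMod n,
          (G.submatrix id (fun j : Fin s => i + ((j : ℕ) : ZMod n))).rank < k} : ℝ)
      ≤ (n : ℝ) * (q : ℝ) ^ (k * n) * (q : ℝ) ^ ((k : ℤ) - (s : ℤ)) / ((q : ℝ) - 1) ∧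
    ((n : ℝ) * (q : ℝ) ^ ((k : ℤ) - (s : ℤ)) / ((q : ℝ) - 1) < 1 →
      ∃ G : Matrix (Fin k) (ZMod n) F,
        ∀ i : ZMod n,
          (G.submatrix id (fun j : Fin s => i + ((j : ℕ) : ZMod n))).rank = k) := by
  set B := Nat.card {G : Matrix (Fin k) (ZMod n) F //
    ∃ i : ZMod n, (G.submatrix id (fun j : Fin s => i + ((j : ℕ) : ZMod n))).rank < k}
  have hq1 : 1 < q := hF ▸ Fintype.one_lt_card
  have hq : (1 : ℝ) < q := by exact_mod_cast hq1
  have hcount : (q - 1) * B * q ^ s ≤ n * (q ^ k * q ^ (k * n)) := by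
    simpa only [Matrix.natCard_eq_pow, Fintype.card_fin, ZMod.card, hF] using
      Matrix.card_exists_rank_submatrix_lt_mul_le (m := Fin k) (K := F)
        (ZMod.injective_add_natCast_fin hsn)
  have hbound : (B : ℝ) ≤ n * q ^ (k * n) * q ^ ((k : ℤ) - s) / (q - 1) := by
    rw [le_div_iff₀ (by linarith), zpow_sub₀ (by positivity), zpow_natCast, zpow_natCast,
      mul_div_assoc', le_div_iff₀ (by positivity)]
    have := (Nat.cast_le (α := ℝ)).mpr hcount
    push_cast [Nat.cast_sub hq1.le] at this
    linarith
  refine ⟨hbound, fun hlt => ?_⟩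
  have hB : (B : ℝ) < Nat.card (Matrix (Fin k) (ZMod n) F) := by
    rw [Matrix.natCard_eq_pow, Fintype.card_fin, ZMod.card, hF, Nat.cast_pow]
    calc (B : ℝ) ≤ q ^ (k * n) * (n * q ^ ((k : ℤ) - s) / (q - 1)) :=
          hbound.trans_eq (by ring)
      _ < q ^ (k * n) := mul_lt_of_lt_one_right (by positivity) hlt
  obtain ⟨G, hG⟩ := exists_not_of_natCard_subtype_lt (by exact_mod_cast hB)
  simp only [not_exists, not_lt] at hG
  exact ⟨G, fun i => (Matrix.rank_le_height _).antisymm (hG i)⟩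

/-- Union bound for the sliding-window technique: the number of `k × n` matrices
`G` over `𝔽_q` (columns indexed cyclically by `ℤ/nℤ`) such that some cyclic
window of `s` consecutive columns has rank `< k` is at most
`n · q^{kn} · q^{k-s}/(q-1)`. In particular, if `n · q^{k-s}/(q-1) < 1`, some
matrix has every cyclic window of `s` consecutive columns of full rank `k`. -/
theorem sliding_window_full_rank_union_bound
    (q k s n : ℕ) [NeZero n] (hq : IsPrimePow q) (hks : k ≤ s) (hsn : s ≤ n)
    (F : Type*) [Field F] [Fintype F] [DecidableEq F] (hF : Fintype.card F = q) :
    (Nat.card {G : Matrix (Fin k) (ZMod n) F //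
        ∃ i : ZMod n,
          (G.submatrix id (fun j : Fin s => i + ((j : ℕ) : ZMod n))).rank < k} : ℝ)
      ≤ (n : ℝ) * (q : ℝ) ^ (k * n) * (q : ℝ) ^ ((k : ℤ) - (s : ℤ)) / ((q : ℝ) - 1) ∧
    ((n : ℝ) * (q : ℝ) ^ ((k : ℤ) - (s : ℤ)) / ((q : ℝ) - 1) < 1 →
      ∃ G : Matrix (Fin k) (ZMod n) F,
        ∀ i : ZMod n,
          (G.submatrix id (fun j : Fin s => i + ((j : ℕ) : ZMod n))).rank = k) :=
  sliding_window_full_rank_union_bound_general q k s n hsn F hF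
end

section
/- Let q ≥ 2 be an integer and let 0 < w < n. Then (q−1)^w · C(n,w) ≥ q^{n·H_q(w/n)}/(n+1), where H_q(x) = x·log_q(q−1) − x·log_q(x) − (1−x)·log_q(1−x) is the q-ary entropy function. -/
lemma binom_max_term' (n w : ℕ) (hw : 0 < w) (hwn : w < n) :
    n ^ n ≤ (n + 1) * (n.choose w * (w ^ w * (n - w) ^ (n - w))) := by
  set f : ℕ → ℕ := fun k => n.choose k * (w ^ k * (n - w) ^ (n - k)) with hf
  have up : ∀ k, k < w → f k ≤ f (k + 1) := by
    intro k hk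
    have hkn : k < n := hk.trans hwn
    have key : n.choose (k+1) * (k+1) = n.choose k * (n - k) := Nat.choose_succ_right_eq n k
    have hnk : n - k = (n - (k+1)) + 1 := by omega
    refine Nat.le_of_mul_le_mul_left ?_ (Nat.succ_pos k)
    calc (k+1) * f k = (n.choose k * (w ^ k * (n - w) ^ (n - (k+1)))) * ((k+1) * (n - w)) := by
          simp only [hf, hnk, pow_succ]; ring
      _ ≤ (n.choose k * (w ^ k * (n - w) ^ (n - (k+1)))) * ((n - k) * w) := by
          apply Nat.mul_le_mul_left
          have h1 : (k+1) * n ≤ w * n := Nat.mul_le_mul_right n hk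
          nlinarith [Nat.sub_add_cancel hwn.le, Nat.sub_add_cancel hkn.le]
      _ = (n.choose k * (n - k)) * (w ^ (k+1) * (n - w) ^ (n - (k+1))) := by ring
      _ = (k+1) * f (k+1) := by rw [← key]; simp only [hf]; ring
  have down : ∀ k, w ≤ k → k < n → f (k + 1) ≤ f k := by
    intro k hk hkn
    have key : n.choose (k+1) * (k+1) = n.choose k * (n - k) := Nat.choose_succ_right_eq n k
    have hnk : n - k = (n - (k+1)) + 1 := by omega
    refine Nat.le_of_mul_le_mul_left ?_ (Nat.succ_pos k)
    calc (k+1) * f (k+1) = (n.choose k * (n - k)) * (w ^ (k+1) * (n - w) ^ (n - (k+1))) := by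
          rw [← key]; simp only [hf]; ring
      _ = (n.choose k * (w ^ k * (n - w) ^ (n - (k+1)))) * ((n - k) * w) := by ring
      _ ≤ (n.choose k * (w ^ k * (n - w) ^ (n - (k+1)))) * ((k+1) * (n - w)) := by
          apply Nat.mul_le_mul_left
          have h1 : w * (n+1) ≤ n * (k+1) := by nlinarith
          nlinarith [Nat.sub_add_cancel hwn.le, Nat.sub_add_cancel hkn.le]
      _ = (k+1) * f k := by simp only [hf, hnk, pow_succ]; ring
  have hmax : ∀ k, k ≤ n → f k ≤ f w := by
    have upto : ∀ j, j ≤ w → f (w - j) ≤ f w := by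
      intro j hj
      induction j with
      | zero => simp
      | succ j ih =>
        have h1 : f (w - (j+1)) ≤ f (w - (j+1) + 1) := up _ (by omega)
        have h2 : w - (j+1) + 1 = w - j := by omega
        exact (h2 ▸ h1).trans (ih (by omega))
    have dnto : ∀ j, w + j ≤ n → f (w + j) ≤ f w := by
      intro j hj
      induction j with
      | zero => simp
      | succ j ih =>
        have h1 : f (w + j + 1) ≤ f (w + j) := down _ (by omega) (by omega)
        exact (show f (w + (j+1)) = f (w+j+1) by ring_nf).symm ▸ h1.trans (ih (by omega))
    intro k hk
    rcases le_or_gt k w with h | h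
    · have := upto (w - k) (by omega)
      rwa [show w - (w - k) = k by omega] at this
    · have := dnto (k - w) (by omega)
      rwa [show w + (k - w) = k by omega] at this
  have hsum : ∑ k ∈ Finset.range (n+1), f k = n ^ n := by
    have := add_pow w (n - w) n
    rw [show w + (n - w) = n by omega] at this
    rw [this]
    apply Finset.sum_congr rfl
    intro k hk
    simp only [hf, Nat.cast_id]
    ring
  calc n ^ n = ∑ k ∈ Finset.range (n+1), f k := hsum.symm
    _ ≤ ∑ _k ∈ Finset.range (n+1), f w :=
        Finset.sum_le_sum (fun k hk => hmax k (Nat.lt_succ_iff.mp (Finset.mem_range.mp hk)))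
    _ = (n+1) * f w := by rw [Finset.sum_const, Finset.card_range, smul_eq_mul]

/-- The `q`-ary entropy function
`H_q(x) = x·log_q(q-1) - x·log_q x - (1-x)·log_q(1-x)`. -/
noncomputable def qaryEntropy (q : ℕ) (x : ℝ) : ℝ :=
  x * Real.logb q ((q : ℝ) - 1) - x * Real.logb q x - (1 - x) * Real.logb q (1 - x)

/-- Entropy lower bound on the number of `q`-ary vectors of weight `w`:
`(q-1)^w · C(n,w) ≥ q^{n·H_q(w/n)}/(n+1)` for `0 < w < n`. -/
theorem qary_volume_ge_entropy_bound
    (q n w : ℕ) (hq : 2 ≤ q) (hw : 0 < w) (hwn : w < n) :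
    (q : ℝ) ^ ((n : ℝ) * qaryEntropy q ((w : ℝ) / (n : ℝ))) / ((n : ℝ) + 1)
      ≤ ((q : ℝ) - 1) ^ w * (n.choose w : ℝ) := by
  have hn0 : (0:ℝ) < (n:ℝ) := by exact_mod_cast Nat.pos_of_ne_zero (by omega)
  have hw0 : (0:ℝ) < (w:ℝ) := by exact_mod_cast hw
  have hnw0 : (0:ℝ) < ((n - w : ℕ):ℝ) := by exact_mod_cast Nat.sub_pos_of_lt hwn
  have hq0 : (0:ℝ) < (q:ℝ) := by positivity
  have hq1 : (1:ℝ) < (q:ℝ) := by exact_mod_cast (by omega : 1 < q)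
  have hqne : (q:ℝ) ≠ 1 := hq1.ne'
  have hqm1 : (0:ℝ) < (q:ℝ) - 1 := by linarith
  have hcastsub : ((n - w : ℕ):ℝ) = (n:ℝ) - (w:ℝ) := by
    push_cast [Nat.cast_sub hwn.le]; ring
  have h1p : 1 - (w:ℝ)/(n:ℝ) = ((n - w : ℕ):ℝ)/(n:ℝ) := by
    rw [hcastsub]; field_simp
  -- expand the exponent
  have e1 : (n:ℝ) * qaryEntropy q ((w:ℝ)/(n:ℝ))
      = (w:ℝ) * Real.logb q ((q:ℝ) - 1) - (w:ℝ) * Real.logb q ((w:ℝ)/(n:ℝ))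
        - ((n - w : ℕ):ℝ) * Real.logb q (((n - w : ℕ):ℝ)/(n:ℝ)) := by
    rw [qaryEntropy, ← h1p, hcastsub]
    field_simp
  have A : (q:ℝ) ^ ((w:ℝ) * Real.logb q ((q:ℝ) - 1)) = ((q:ℝ) - 1) ^ w := by
    rw [mul_comm, Real.rpow_mul hq0.le, Real.rpow_logb hq0 hqne hqm1, Real.rpow_natCast]
  have B : (q:ℝ) ^ ((w:ℝ) * Real.logb q ((w:ℝ)/(n:ℝ))) = ((w:ℝ)/(n:ℝ)) ^ w := by
    rw [mul_comm, Real.rpow_mul hq0.le, Real.rpow_logb hq0 hqne (by positivity),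
      Real.rpow_natCast]
  have C : (q:ℝ) ^ (((n - w : ℕ):ℝ) * Real.logb q (((n - w : ℕ):ℝ)/(n:ℝ)))
      = (((n - w : ℕ):ℝ)/(n:ℝ)) ^ (n - w) := by
    rw [mul_comm, Real.rpow_mul hq0.le, Real.rpow_logb hq0 hqne (by positivity),
      Real.rpow_natCast]
  have hqE : (q:ℝ) ^ ((n:ℝ) * qaryEntropy q ((w:ℝ)/(n:ℝ)))
      = ((q:ℝ) - 1) ^ w / (((w:ℝ)/(n:ℝ)) ^ w * ((((n - w : ℕ)):ℝ)/(n:ℝ)) ^ (n - w)) := by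
    rw [e1, Real.rpow_sub hq0, Real.rpow_sub hq0, A, B, C, div_div]
  -- the combinatorial bound, cast to ℝ
  have hnat := binom_max_term' n w hw hwn
  have hcast : (n:ℝ) ^ n ≤ ((n:ℝ) + 1) * ((n.choose w : ℝ) * ((w:ℝ) ^ w * ((n - w : ℕ):ℝ) ^ (n - w))) := by
    exact_mod_cast hnat
  set P : ℝ := ((w:ℝ)/(n:ℝ)) ^ w * ((((n - w : ℕ)):ℝ)/(n:ℝ)) ^ (n - w) with hP
  have hPpos : 0 < P := by positivity
  have hPval : P = ((w:ℝ) ^ w * ((n - w : ℕ):ℝ) ^ (n - w)) / (n:ℝ) ^ n := by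
    rw [hP, div_pow, div_pow, div_mul_div_comm, ← pow_add,
      show w + (n - w) = n by omega]
  have hone : 1 ≤ ((n:ℝ) + 1) * ((n.choose w : ℝ) * P) := by
    rw [hPval, ← mul_div_assoc, ← mul_div_assoc, le_div_iff₀ (by positivity), one_mul]
    linarith [hcast]
  rw [div_le_iff₀ (by positivity : (0:ℝ) < (n:ℝ) + 1), hqE, div_le_iff₀ hPpos]
  have hG : (0:ℝ) < ((q:ℝ) - 1) ^ w := by positivity
  nlinarith [mul_le_mul_of_nonneg_left hone hG.le]
end

section
/- Let ℓ ≥ 4 be an integer, let f_ℓ(z) := ((1+z)^{ℓ−1} − (1−z)^{ℓ−1})/2, and let z_ℓ ∈ (0,1) be the unique root of f_ℓ(z) = 1. Then ln(1+√2) < (ℓ−1)·z_ℓ < 1. Equivalently, γ_ℓ := 1/((ℓ−1)·z_ℓ) satisfies 1 < γ_ℓ < 1/ln(1+√2) = 1/arcsinh(1) ≈ 1.135. -/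
/-!
Put `n = ℓ - 1` and `t = n z`. The root equation says that the odd part
`∑ₘ C(n, 2m+1) z^(2m+1)` of the binomial series of `(1 + z)^n` equals `1`. Its first term is
`t`, so `t < 1`. Termwise `C(n, k) z^k ≤ (n z)^k / k!`, strictly for `k = 3`, so the odd part is
strictly smaller than the odd part `sinh t` of the exponential series; hence `sinh t > 1`,
i.e. `t > arsinh 1 = log (1 + √2)`.
-/

open Finset Real
open scoped Nat

lemma hasSum_choose_mul_pow (n : ℕ) (x : ℝ) :
    HasSum (fun k => (n.choose k : ℝ) * x ^ k) ((1 + x) ^ n) := by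
  have hfin : ∀ k ∉ range (n + 1), (n.choose k : ℝ) * x ^ k = 0 := fun k hk => by
    simp [Nat.choose_eq_zero_of_lt (by simpa using hk)]
  have hsum : HasSum (fun k => (n.choose k : ℝ) * x ^ k)
      (∑ k ∈ range (n + 1), n.choose k * x ^ k) :=
    hasSum_sum_of_ne_finset_zero hfin
  rw [add_comm, add_pow]
  simpa only [one_pow, mul_one, mul_comm] using hsum

lemma hasSum_choose_odd_mul_pow (n : ℕ) (x : ℝ) :
    HasSum (fun m => (n.choose (2 * m + 1) : ℝ) * x ^ (2 * m + 1))
      (((1 + x) ^ n - (1 - x) ^ n) / 2) := by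
  have hsum := ((hasSum_choose_mul_pow n x).sub (hasSum_choose_mul_pow n (-x))).div_const 2
  rw [← sub_eq_add_neg] at hsum
  have hodd : Function.Injective fun m : ℕ => 2 * m + 1 := fun a b h => by simp only at h; omega
  rw [← hodd.hasSum_iff] at hsum
  · simpa only [Function.comp_def, (odd_two_mul_add_one _).neg_pow, mul_neg, sub_neg_eq_add,
      add_self_div_two] using hsum
  · intro k hk
    have hk_even : Even k := Nat.not_odd_iff_even.mp fun ⟨m, hm⟩ => hk ⟨m, hm.symm⟩
    simp [hk_even.neg_pow]

lemma choose_mul_pow_le_pow_div_factorial (n k : ℕ) {x : ℝ} (hx : 0 ≤ x) :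
    (n.choose k : ℝ) * x ^ k ≤ (n * x) ^ k / k ! := by
  calc (n.choose k : ℝ) * x ^ k ≤ (n ^ k : ℝ) / k ! * x ^ k := by
        gcongr
        exact Nat.choose_le_pow_div k n
    _ = (n * x) ^ k / k ! := by ring

lemma choose_mul_pow_lt_pow_div_factorial {n k : ℕ} (hn : n ≠ 0) (hk : 2 ≤ k) {x : ℝ}
    (hx : 0 < x) : (n.choose k : ℝ) * x ^ k < (n * x) ^ k / k ! := by
  calc (n.choose k : ℝ) * x ^ k < (n ^ k : ℝ) / k ! * x ^ k := by
        gcongr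
        exact Nat.choose_lt_pow_div hn hk
    _ = (n * x) ^ k / k ! := by ring

lemma mul_lt_odd_part_one_add_pow {n : ℕ} (hn : 3 ≤ n) {x : ℝ} (hx : 0 < x) :
    n * x < ((1 + x) ^ n - (1 - x) ^ n) / 2 := by
  refine hasSum_lt (f := fun m => if m = 0 then (n * x : ℝ) else 0) (i := 1) (fun m => ?_)
    ?_ (hasSum_ite_eq 0 _) (hasSum_choose_odd_mul_pow n x)
  · rcases eq_or_ne m 0 with rfl | hm
    · simp
    · simp only [hm, if_false]
      positivity
  · have : 0 < n.choose 3 := Nat.choose_pos hn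
    simp only [one_ne_zero, if_false]
    positivity

lemma odd_part_one_add_pow_lt_sinh {n : ℕ} (hn : n ≠ 0) {x : ℝ} (hx : 0 < x) :
    ((1 + x) ^ n - (1 - x) ^ n) / 2 < sinh (n * x) :=
  hasSum_lt (i := 1) (fun m => choose_mul_pow_le_pow_div_factorial n _ hx.le)
    (choose_mul_pow_lt_pow_div_factorial hn (by norm_num) hx)
    (hasSum_choose_odd_mul_pow n x) (hasSum_sinh _)

lemma arsinh_one : arsinh 1 = log (1 + √2) := by
  norm_num [arsinh]

/-- For `ℓ ≥ 4`, the root `z_ℓ ∈ (0,1)` of `((1+z)^{ℓ-1} - (1-z)^{ℓ-1})/2 = 1`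
satisfies `ln(1+√2) < (ℓ-1)·z_ℓ < 1`; equivalently
`γ_ℓ := 1/((ℓ-1)·z_ℓ)` satisfies `1 < γ_ℓ < 1/ln(1+√2)`. -/
theorem step_polynomial_root_bounds
    (ℓ : ℕ) (hℓ : 4 ≤ ℓ) (z : ℝ) (hz : z ∈ Set.Ioo (0 : ℝ) 1)
    (hroot : ((1 + z) ^ (ℓ - 1) - (1 - z) ^ (ℓ - 1)) / 2 = 1) :
    Real.log (1 + Real.sqrt 2) < ((ℓ : ℝ) - 1) * z ∧
    ((ℓ : ℝ) - 1) * z < 1 ∧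
    1 < 1 / (((ℓ : ℝ) - 1) * z) ∧
    1 / (((ℓ : ℝ) - 1) * z) < 1 / Real.log (1 + Real.sqrt 2) := by
  have hcast : (ℓ : ℝ) - 1 = ((ℓ - 1 : ℕ) : ℝ) := by
    rw [Nat.cast_sub (by omega), Nat.cast_one]
  rw [hcast, ← arsinh_one]
  have hupper : ((ℓ - 1 : ℕ) : ℝ) * z < 1 :=
    hroot ▸ mul_lt_odd_part_one_add_pow (by omega) hz.1
  have hlower : arsinh 1 < ((ℓ - 1 : ℕ) : ℝ) * z := by
    rw [← sinh_lt_sinh, sinh_arsinh]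
    exact hroot ▸ odd_part_one_add_pow_lt_sinh (by omega) hz.1
  have ht : 0 < ((ℓ - 1 : ℕ) : ℝ) * z := mul_pos (by norm_cast; omega) hz.1
  exact ⟨hlower, hupper, one_lt_one_div ht hupper,
    one_div_lt_one_div_of_lt (arsinh_pos_iff.2 one_pos) hlower⟩
end

section
/- For ℓ ≥ 3, let z_ℓ ∈ (0,1) be the unique root of ((1+z)^{ℓ−1} − (1−z)^{ℓ−1})/2 = 1. Then the quantity γ_ℓ := 1/((ℓ−1)·z_ℓ) is strictly increasing in ℓ; equivalently, (ℓ−1)·z_ℓ > ℓ·z_{ℓ+1} for all ℓ ≥ 3. -/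
/-!
Put `w = ℓ z_{ℓ+1}`. Binomially,
`(1 + w/n)^n - (1 - w/n)^n = ∑ (1 - (-1)^k) C(n,k) (w/n)^k`, and
`C(n,k) / n^k = (1/k!) ∏_{i<k} (1 - i/n)` increases with `n`, strictly for `k = 3` once `n ≥ 2`.
Hence `f_ℓ(w/(ℓ-1)) < f_{ℓ+1}(w/ℓ) = 1 = f_ℓ(z_ℓ)`, and as `f_ℓ` is increasing on
`[0, ∞)`, `ℓ z_{ℓ+1} = w < (ℓ - 1) z_ℓ`.
-/
open Finset

theorem one_add_pow_sub_one_sub_pow {R : Type*} [CommRing R] (x : R) (n : ℕ) :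
    (1 + x) ^ n - (1 - x) ^ n = ∑ k ∈ range (n + 1), (1 - (-1) ^ k) * x ^ k * n.choose k := by
  rw [add_comm 1 x, sub_eq_neg_add 1 x, add_pow, add_pow, ← sum_sub_distrib]
  refine sum_congr rfl fun k _ => ?_
  rw [neg_pow]
  ring

theorem Nat.descFactorial_mul_succ_pow_le (n k : ℕ) :
    n.descFactorial k * (n + 1) ^ k ≤ (n + 1).descFactorial k * n ^ k := by
  have prod_form (a b : ℕ) : a.descFactorial k * b ^ k = ∏ i ∈ range k, ((a - i) * b) := by
    rw [prod_mul_distrib, prod_const, card_range, descFactorial_eq_prod_range]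
  rw [prod_form, prod_form]
  refine prod_le_prod (fun _ _ => Nat.zero_le _) fun i _ => ?_
  rcases le_total i n with h | h
  · zify [h, h.trans n.le_succ]
    nlinarith
  · simp [Nat.sub_eq_zero_of_le h]

theorem Nat.choose_mul_succ_pow_le (n k : ℕ) :
    n.choose k * (n + 1) ^ k ≤ (n + 1).choose k * n ^ k := by
  refine Nat.le_of_mul_le_mul_left ?_ k.factorial_pos
  simpa only [← mul_assoc, ← descFactorial_eq_factorial_mul_choose]
    using descFactorial_mul_succ_pow_le n k

theorem Nat.choose_three_mul_succ_pow_lt {n : ℕ} (hn : 2 ≤ n) :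
    n.choose 3 * (n + 1) ^ 3 < (n + 1).choose 3 * n ^ 3 := by
  refine Nat.lt_of_mul_lt_mul_left (a := Nat.factorial 3) ?_
  simp only [← mul_assoc, ← descFactorial_eq_factorial_mul_choose]
  obtain ⟨m, rfl⟩ := Nat.exists_eq_add_of_le' hn
  simp only [succ_descFactorial_succ, descFactorial_one, descFactorial_zero]
  ring_nf
  nlinarith

theorem one_sub_neg_one_pow_nonneg (k : ℕ) : (0 : ℝ) ≤ 1 - (-1) ^ k := by
  rcases neg_one_pow_eq_or ℝ k with h | h <;> rw [h] <;> norm_num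

theorem div_pow_mul_choose_le {n : ℕ} (hn : 0 < n) (k : ℕ) {w : ℝ} (hw : 0 ≤ w) :
    (w / n) ^ k * n.choose k ≤ (w / (n + 1)) ^ k * (n + 1).choose k := by
  have key : (n.choose k * (n + 1) ^ k : ℝ) ≤ (n + 1).choose k * n ^ k := by
    exact_mod_cast Nat.choose_mul_succ_pow_le n k
  rw [div_pow, div_pow, div_mul_eq_mul_div, div_mul_eq_mul_div,
    div_le_div_iff₀ (by positivity) (by positivity)]
  calc w ^ k * n.choose k * (n + 1) ^ k = w ^ k * (n.choose k * (n + 1) ^ k) := by ring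
    _ ≤ w ^ k * ((n + 1).choose k * n ^ k) := by gcongr
    _ = _ := by ring

theorem div_pow_mul_choose_three_lt {n : ℕ} (hn : 2 ≤ n) {w : ℝ} (hw : 0 < w) :
    (w / n) ^ 3 * n.choose 3 < (w / (n + 1)) ^ 3 * (n + 1).choose 3 := by
  have key : (n.choose 3 * (n + 1) ^ 3 : ℝ) < (n + 1).choose 3 * n ^ 3 := by
    exact_mod_cast Nat.choose_three_mul_succ_pow_lt hn
  have : (0 : ℝ) < n := by positivity
  rw [div_pow, div_pow, div_mul_eq_mul_div, div_mul_eq_mul_div,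
    div_lt_div_iff₀ (by positivity) (by positivity)]
  calc w ^ 3 * n.choose 3 * (n + 1) ^ 3 = w ^ 3 * (n.choose 3 * (n + 1) ^ 3) := by ring
    _ < w ^ 3 * ((n + 1).choose 3 * n ^ 3) := by gcongr
    _ = _ := by ring

theorem one_add_div_pow_sub_one_sub_div_pow_lt_succ {n : ℕ} (hn : 2 ≤ n) {w : ℝ}
    (hw : 0 < w) :
    (1 + w / n) ^ n - (1 - w / n) ^ n <
      (1 + w / (n + 1)) ^ (n + 1) - (1 - w / (n + 1)) ^ (n + 1) := by
  -- the vanishing term `k = n + 1` is added on the left: for `n = 2`, `k = 3` is that term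
  have three_mem : 3 ∈ range (n + 2) := mem_range.2 (by omega)
  calc (1 + w / n) ^ n - (1 - w / n) ^ n
      = ∑ k ∈ range (n + 2), (1 - (-1) ^ k) * (w / n) ^ k * n.choose k := by
        rw [one_add_pow_sub_one_sub_pow, sum_range_succ _ (n + 1), Nat.choose_succ_self,
          Nat.cast_zero, mul_zero, add_zero]
    _ < ∑ k ∈ range (n + 2), (1 - (-1) ^ k) * (w / (n + 1)) ^ k * (n + 1).choose k := by
        refine sum_lt_sum (fun k _ => ?_) ⟨3, three_mem, ?_⟩
        · simp only [mul_assoc]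
          exact mul_le_mul_of_nonneg_left (div_pow_mul_choose_le (by omega) k hw.le)
            (one_sub_neg_one_pow_nonneg k)
        · norm_num [mul_assoc]
          exact div_pow_mul_choose_three_lt hn hw
    _ = _ := (one_add_pow_sub_one_sub_pow _ _).symm

theorem strictMonoOn_one_add_pow_sub_one_sub_pow {n : ℕ} (hn : 1 ≤ n) :
    StrictMonoOn (fun z : ℝ => (1 + z) ^ n - (1 - z) ^ n) (Set.Ici 0) := by
  intro a ha b _ hab
  simp only [one_add_pow_sub_one_sub_pow]
  refine sum_lt_sum (fun k _ => ?_) ⟨1, mem_range.2 (by omega), ?_⟩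
  · have := one_sub_neg_one_pow_nonneg k
    gcongr
  · have : (0 : ℝ) < n := by exact_mod_cast hn
    norm_num
    gcongr

/-- Monotonicity of `γ_ℓ`: if `z₁ ∈ (0,1)` is the root of
`((1+z)^{ℓ-1} - (1-z)^{ℓ-1})/2 = 1` and `z₂ ∈ (0,1)` is the root of
`((1+z)^ℓ - (1-z)^ℓ)/2 = 1` (i.e. the root for `ℓ+1`), then
`ℓ·z₂ < (ℓ-1)·z₁`; equivalently `γ_ℓ := 1/((ℓ-1)z_ℓ)` is strictly
increasing in `ℓ` for `ℓ ≥ 3`. -/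
theorem step_polynomial_root_monotone
    (ℓ : ℕ) (hℓ : 3 ≤ ℓ) (z₁ z₂ : ℝ)
    (hz₁ : z₁ ∈ Set.Ioo (0 : ℝ) 1)
    (h₁ : ((1 + z₁) ^ (ℓ - 1) - (1 - z₁) ^ (ℓ - 1)) / 2 = 1)
    (hz₂ : z₂ ∈ Set.Ioo (0 : ℝ) 1)
    (h₂ : ((1 + z₂) ^ ℓ - (1 - z₂) ^ ℓ) / 2 = 1) :
    (ℓ : ℝ) * z₂ < ((ℓ : ℝ) - 1) * z₁ := by
  obtain ⟨n, rfl⟩ : ∃ n, ℓ = n + 1 := ⟨ℓ - 1, by omega⟩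
  rw [Nat.add_sub_cancel] at h₁
  push_cast at h₂ ⊢
  rw [add_sub_cancel_right]
  have hn : (0 : ℝ) < n := by norm_cast; omega
  set w := (n + 1 : ℝ) * z₂
  have hw : 0 < w := mul_pos (by positivity) hz₂.1
  have hz₂w : z₂ = w / (n + 1) := eq_div_of_mul_eq (by positivity) (mul_comm _ _)
  have scaled_lt : (1 + w / n) ^ n - (1 - w / n) ^ n < (1 + z₁) ^ n - (1 - z₁) ^ n := by
    calc _ < (1 + w / (n + 1)) ^ (n + 1) - (1 - w / (n + 1)) ^ (n + 1) :=
          one_add_div_pow_sub_one_sub_div_pow_lt_succ (by omega) hw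
      _ = (1 + z₁) ^ n - (1 - z₁) ^ n := by rw [← hz₂w]; linarith
  have hlt : w / n < z₁ := ((strictMonoOn_one_add_pow_sub_one_sub_pow (by omega)).lt_iff_lt
    (Set.mem_Ici.2 (by positivity)) (Set.mem_Ici.2 hz₁.1.le)).1 scaled_lt
  rwa [div_lt_iff₀' hn] at hlt
end
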